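/- For all integers m, n ≥ 3, the union N0(m,n) ∪ N2(m,n) is contained in the rank-two null space N(S_{(m,n)}, 2). -/

import Mathlib

open scoped BigOperators
open MeasureTheory

noncomputable section

/-- 1-based access into a vector `u ∈ ℝ^d`, with the convention that
out-of-range indices (including `0` and anything `> d`) give `0`. -/
def pad1 {d : ℕ} (u : Fin d → ℝ) (i : ℕ) : ℝ :=
  if h : 1 ≤ i ∧ i ≤ d then u ⟨i - 1, by omega⟩ else 0

/-- The lifted linear convolution map `S_{(m,n)} : ℝ^{m×n} → ℝ^{m+n-1}`,
summing the entries of a matrix along its anti-diagonals. -/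
def liftS (m n : ℕ) (W : Matrix (Fin m) (Fin n) ℝ) : Fin (m + n - 1) → ℝ :=
  fun l => ∑ k : Fin m, ∑ j : Fin n, if (k : ℕ) + (j : ℕ) = (l : ℕ) then W k j else 0

/-- Linear convolution `x ⋆ y ∈ ℝ^{m+n-1}` of `x ∈ ℝ^m` and `y ∈ ℝ^n`. -/
def conv {m n : ℕ} (x : Fin m → ℝ) (y : Fin n → ℝ) : Fin (m + n - 1) → ℝ :=
  fun l => ∑ k : Fin m, ∑ j : Fin n, if (k : ℕ) + (j : ℕ) = (l : ℕ) then x k * y j else 0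

/-- The rank-two null space `N(S_{(m,n)}, 2)`. -/
def rankTwoNull (m n : ℕ) : Set (Matrix (Fin m) (Fin n) ℝ) :=
  {Q | Q.rank ≤ 2 ∧ liftS m n Q = 0}

/-- The parametrized family `N0(m,n)`:
`Q(k,l) = u(k)·v(l−1) − u(k−1)·v(l)` (1-based, with zero-padding conventions). -/
def N0set (m n : ℕ) : Set (Matrix (Fin m) (Fin n) ℝ) :=
  {Q | ∃ (u : Fin (m - 1) → ℝ) (v : Fin (n - 1) → ℝ),
    ∀ (k : Fin m) (l : Fin n),
      Q k l = pad1 u ((k : ℕ) + 1) * pad1 v (l : ℕ) - pad1 u (k : ℕ) * pad1 v ((l : ℕ) + 1)}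

/-- The recursively defined family `N2(m,n)`:
`Q(k,l) = u₁(k)·v₁(l−1) + u₂(k−1)·v₂(l)` (1-based, with zero-padding conventions),
where `u₁v₁ᵀ + u₂v₂ᵀ ∈ N(S_{(m-1,n-1)}, 2) \ {0}`. -/
def N2set (m n : ℕ) : Set (Matrix (Fin m) (Fin n) ℝ) :=
  {Q | ∃ (u₁ u₂ : Fin (m - 1) → ℝ) (v₁ v₂ : Fin (n - 1) → ℝ),
    (Matrix.of fun i j => u₁ i * v₁ j + u₂ i * v₂ j) ∈ rankTwoNull (m - 1) (n - 1) ∧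
    (Matrix.of fun i j => u₁ i * v₁ j + u₂ i * v₂ j) ≠ (0 : Matrix (Fin (m - 1)) (Fin (n - 1)) ℝ) ∧
    ∀ (k : Fin m) (l : Fin n),
      Q k l = pad1 u₁ ((k : ℕ) + 1) * pad1 v₁ (l : ℕ) + pad1 u₂ (k : ℕ) * pad1 v₂ ((l : ℕ) + 1)}

/-- The exceptional set `M(m,n) = {Q ∈ N(S_{(m,n)}, 2) : Q(m,1) = 0 and Q(1,n) = 0}` (1-based). -/
def Mexc (m n : ℕ) (hm : 0 < m) (hn : 0 < n) : Set (Matrix (Fin m) (Fin n) ℝ) :=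
  {Q | Q ∈ rankTwoNull m n ∧ Q ⟨m - 1, by omega⟩ ⟨0, hn⟩ = 0 ∧ Q ⟨0, hm⟩ ⟨n - 1, by omega⟩ = 0}

/-- Identifiability of the pair `p = (x,y)` with respect to linear convolution
and the constraint set `K`. -/
def Identifiable {m n : ℕ} (K : Set ((Fin m → ℝ) × (Fin n → ℝ)))
    (p : (Fin m → ℝ) × (Fin n → ℝ)) : Prop :=
  ∀ q ∈ K, conv q.1 q.2 = conv p.1 p.2 →
    ∃ α : ℝ, α ≠ 0 ∧ q.1 = α • p.1 ∧ q.2 = (1 / α) • p.2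

/-- The quotient set `Q∼(w,d)`: pairs `(w*, γ) ∈ ℝ^{d-1} × [0, 2π)` with
`w(j) = w*(j)·cos γ − w*(j−1)·sin γ` for `1 ≤ j ≤ d` (1-based, zero-padding conventions). -/
def quotSet (d : ℕ) (w : Fin d → ℝ) : Set ((Fin (d - 1) → ℝ) × ℝ) :=
  {p | p.2 ∈ Set.Ico 0 (2 * Real.pi) ∧
    ∀ j : Fin d, w j = pad1 p.1 ((j : ℕ) + 1) * Real.cos p.2 - pad1 p.1 (j : ℕ) * Real.sin p.2}

/-- Matrices over `ℝ` carry the (product) metric space structure of `ℝ^{m×n}`. -/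
instance {m n : ℕ} : MetricSpace (Matrix (Fin m) (Fin n) ℝ) :=
  show MetricSpace (Fin m → Fin n → ℝ) from inferInstance

/-! Read a matrix `Q` as the polynomial `∑ Q k j x^k y^j`; then `liftS Q` lists the coefficients
of its restriction to `x = y = t`, i.e. the antidiagonal sums of `Q`. Viewing `a = pad1 u`,
`b = pad1 v` as sequences vanishing at `0`, both rank-one pieces of an `N0` matrix have `l`-th
antidiagonal sum equal to the `(l+1)`-st coefficient of the Cauchy product `a ⋆ b`, so they cancel.
An `N2` matrix has `l`-th antidiagonal sum equal to the `(l+1)`-st coefficient of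
`a₁ ⋆ b₁ + a₂ ⋆ b₂`. All coefficients of this sum vanish: those of index `0`, `1` and those
beyond the supports trivially, and the remaining ones are the antidiagonal sums of the smaller
matrix `u₁v₁ᵀ + u₂v₂ᵀ`, zero by assumption. Both families consist of sums of two rank-one
matrices. -/

open Matrix Finset.HasAntidiagonal

section pad1

variable {d : ℕ} (u : Fin d → ℝ)

@[simp] lemma pad1_zero : pad1 u 0 = 0 := by
  simp [pad1]

@[simp] lemma pad1_val_add_one (i : Fin d) : pad1 u (i + 1) = u i := by
  simp [pad1]

end pad1

lemma pad1_eq_zero_of_le {m i : ℕ} (u : Fin (m - 1) → ℝ) (h : m ≤ i) : pad1 u i = 0 :=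
  dif_neg (by omega)

section antidiagonal

variable {M : Type*} [AddCommMonoid M] {F : ℕ → ℕ → M}

lemma sum_antidiagonal_succ_of_fst_zero (hF : ∀ j, F 0 j = 0) (N : ℕ) :
    ∑ p ∈ antidiagonal N, F (p.1 + 1) p.2 = ∑ p ∈ antidiagonal (N + 1), F p.1 p.2 := by
  rw [Finset.Nat.sum_antidiagonal_succ, hF, zero_add]

lemma sum_antidiagonal_succ_of_snd_zero (hF : ∀ k, F k 0 = 0) (N : ℕ) :
    ∑ p ∈ antidiagonal N, F p.1 (p.2 + 1) = ∑ p ∈ antidiagonal (N + 1), F p.1 p.2 := by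
  rw [Finset.Nat.sum_antidiagonal_succ', hF, zero_add]

lemma sum_antidiagonal_eq_zero_of_le {m n N : ℕ} (hF : ∀ k j, m ≤ k ∨ n ≤ j → F k j = 0)
    (hN : m + n ≤ N + 1) : ∑ p ∈ antidiagonal N, F p.1 p.2 = 0 :=
  Finset.sum_eq_zero fun p hp => hF _ _ (by have := mem_antidiagonal.1 hp; omega)

end antidiagonal

lemma rank_le_two_of_apply_eq {R ι κ : Type*} [Field R] [Fintype ι] [Fintype κ]
    {Q : Matrix ι κ R} (a c : ι → R) (b d : κ → R) (hQ : ∀ k l, Q k l = a k * b l + c k * d l) :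
    Q.rank ≤ 2 := by
  have hfac : Q = (of fun k i => ![a k, c k] i) * of fun i l => ![b l, d l] i := by
    ext k l
    simp [hQ, Matrix.mul_apply, Fin.sum_univ_two]
  rw [hfac]
  exact (rank_mul_le_left _ _).trans ((rank_le_card_width _).trans (by simp))

lemma liftS_apply_eq_sum_antidiagonal {m n : ℕ} {Q : Matrix (Fin m) (Fin n) ℝ} {F : ℕ → ℕ → ℝ}
    (hQ : ∀ k j, Q k j = F k j) (hF : ∀ k j, m ≤ k ∨ n ≤ j → F k j = 0) (l : Fin (m + n - 1)) :
    liftS m n Q l = ∑ p ∈ antidiagonal (l : ℕ), F p.1 p.2 := by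
  rw [liftS, ← Finset.sum_product']
  refine Finset.sum_bij_ne_zero (fun p _ _ => ((p.1 : ℕ), (p.2 : ℕ))) ?_ ?_ ?_ ?_
  · intro p _ h
    simp only [mem_antidiagonal]
    by_contra h'
    exact h (if_neg h')
  · intro p _ _ q _ _ h
    simp only [Prod.mk.injEq] at h
    exact Prod.ext (Fin.ext h.1) (Fin.ext h.2)
  · intro p hp hne
    have hk : p.1 < m := by
      by_contra h; exact hne (hF _ _ (Or.inl (by omega)))
    have hj : p.2 < n := by
      by_contra h; exact hne (hF _ _ (Or.inr (by omega)))
    exact ⟨(⟨p.1, hk⟩, ⟨p.2, hj⟩), Finset.mem_univ _,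
      by simpa [mem_antidiagonal.1 hp, hQ] using hne, rfl⟩
  · intro p _ h
    rw [if_pos (by by_contra h'; exact h (if_neg h')), hQ]

lemma N0set_subset_rankTwoNull (m n : ℕ) : N0set m n ⊆ rankTwoNull m n := by
  rintro Q ⟨u, v, hQ⟩
  constructor
  · exact rank_le_two_of_apply_eq (fun k => pad1 u (k + 1)) (fun k => -pad1 u k)
      (fun l => pad1 v l) (fun l => pad1 v (l + 1)) fun k l => by rw [hQ]; ring
  · funext l
    have hF : ∀ k j, m ≤ k ∨ n ≤ j →
        pad1 u (k + 1) * pad1 v j - pad1 u k * pad1 v (j + 1) = 0 := by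
      rintro k j (hk | hj)
      · simp [pad1_eq_zero_of_le u hk, pad1_eq_zero_of_le u (show m ≤ k + 1 by omega)]
      · simp [pad1_eq_zero_of_le v hj, pad1_eq_zero_of_le v (show n ≤ j + 1 by omega)]
    rw [liftS_apply_eq_sum_antidiagonal hQ hF, Finset.sum_sub_distrib,
      sum_antidiagonal_succ_of_fst_zero (F := fun k j => pad1 u k * pad1 v j) (by simp),
      sum_antidiagonal_succ_of_snd_zero (F := fun k j => pad1 u k * pad1 v j) (by simp), sub_self]
    rfl

lemma sum_antidiagonal_pad1_eq_zero {m n : ℕ} {u₁ u₂ : Fin (m - 1) → ℝ}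
    {v₁ v₂ : Fin (n - 1) → ℝ}
    (hP : liftS (m - 1) (n - 1) (of fun i j => u₁ i * v₁ j + u₂ i * v₂ j) = 0) (N : ℕ) :
    ∑ p ∈ antidiagonal N, (pad1 u₁ p.1 * pad1 v₁ p.2 + pad1 u₂ p.1 * pad1 v₂ p.2) = 0 := by
  set F : ℕ → ℕ → ℝ := fun k j => pad1 u₁ k * pad1 v₁ j + pad1 u₂ k * pad1 v₂ j
  have hF : ∀ k j, m ≤ k ∨ n ≤ j → F k j = 0 := by
    rintro k j (hk | hj)
    · simp [F, pad1_eq_zero_of_le u₁ hk, pad1_eq_zero_of_le u₂ hk]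
    · simp [F, pad1_eq_zero_of_le v₁ hj, pad1_eq_zero_of_le v₂ hj]
  match N with
  | 0 => simp
  | 1 => simp [Finset.Nat.antidiagonal_succ]
  | L + 2 =>
    show ∑ p ∈ antidiagonal (L + 2), F p.1 p.2 = 0
    by_cases hL : L < m - 1 + (n - 1) - 1
    · have hPL := liftS_apply_eq_sum_antidiagonal
        (Q := of fun i j => u₁ i * v₁ j + u₂ i * v₂ j) (F := fun k j => F (k + 1) (j + 1))
        (fun k j => by simp [F]) (fun k j hkj => hF _ _ (by omega)) ⟨L, hL⟩
      rw [hP, Pi.zero_apply] at hPL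
      rw [← sum_antidiagonal_succ_of_snd_zero (by simp [F]),
        ← sum_antidiagonal_succ_of_fst_zero (F := fun k j => F k (j + 1)) (by simp [F]), hPL]
    · exact sum_antidiagonal_eq_zero_of_le hF (by omega)

lemma N2set_subset_rankTwoNull (m n : ℕ) : N2set m n ⊆ rankTwoNull m n := by
  rintro Q ⟨u₁, u₂, v₁, v₂, ⟨-, hP⟩, -, hQ⟩
  constructor
  · exact rank_le_two_of_apply_eq (fun k => pad1 u₁ (k + 1)) (fun k => pad1 u₂ k)
      (fun l => pad1 v₁ l) (fun l => pad1 v₂ (l + 1)) hQ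
  · funext l
    have hF : ∀ k j, m ≤ k ∨ n ≤ j →
        pad1 u₁ (k + 1) * pad1 v₁ j + pad1 u₂ k * pad1 v₂ (j + 1) = 0 := by
      rintro k j (hk | hj)
      · simp [pad1_eq_zero_of_le u₂ hk, pad1_eq_zero_of_le u₁ (show m ≤ k + 1 by omega)]
      · simp [pad1_eq_zero_of_le v₁ hj, pad1_eq_zero_of_le v₂ (show n ≤ j + 1 by omega)]
    rw [liftS_apply_eq_sum_antidiagonal hQ hF, Finset.sum_add_distrib,
      sum_antidiagonal_succ_of_fst_zero (F := fun k j => pad1 u₁ k * pad1 v₁ j) (by simp),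
      sum_antidiagonal_succ_of_snd_zero (F := fun k j => pad1 u₂ k * pad1 v₂ j) (by simp),
      ← Finset.sum_add_distrib]
    exact sum_antidiagonal_pad1_eq_zero hP _

theorem stmt4_general (m n : ℕ) :
    N0set m n ∪ N2set m n ⊆ rankTwoNull m n :=
  Set.union_subset (N0set_subset_rankTwoNull m n) (N2set_subset_rankTwoNull m n)

/-- for `m, n ≥ 3`, `N0(m,n) ∪ N2(m,n) ⊆ N(S_{(m,n)}, 2)`. -/
theorem stmt4 (m n : ℕ) (hm : 3 ≤ m) (hn : 3 ≤ n) :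
    N0set m n ∪ N2set m n ⊆ rankTwoNull m n :=
  stmt4_general m n
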